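/- Let M be a countable coarse group satisfying the negative-expression axiom and such that the product of full filters is associative. Then for every *subgroup U of M, the set Û is a subgroup of the group F(M) of full filters; moreover, for all A ∈ M and all *subgroups U: A ∈ LC(U) iff Â is a left coset of Û in F(M) (and similarly for right *cosets and right cosets), and (Â)⁻¹ = {x⁻¹ : x ∈ Â} equals the set Â⋄ determined by A⋄. -/
import Mathlib


/-! Abstract coarse groups (Nies–Schlicht–Tent). -/

namespace CoarsePaper

/-- A structure with one ternary relation `rel A B C`, read "AB ⊑ C". -/
structure CG (M : Type) : Type where
  rel : M → M → M → Prop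

variable {M : Type}

/-- `U` is a *subgroup: `UU ⊑ U`. -/
def IsSub (c : CG M) (U : M) : Prop := c.rel U U U

/-- For *subgroups, `U ⊑ V` means `UV ⊑ V`. -/
def sle (c : CG M) (U V : M) : Prop := c.rel U V V

/-- `A ∈ LC(U)`: `U` is the ⊑-maximum *subgroup with `AU ⊑ A`. -/
def LC (c : CG M) (U A : M) : Prop :=
  IsSub c U ∧ c.rel A U A ∧ ∀ V, IsSub c V → c.rel A V A → sle c V U

/-- `A ∈ RC(U)`: `U` is the ⊑-maximum *subgroup with `UA ⊑ A`. -/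
def RC (c : CG M) (U A : M) : Prop :=
  IsSub c U ∧ c.rel U A A ∧ ∀ V, IsSub c V → c.rel V A A → sle c V U

/-- `A ⊑ B` for arbitrary elements: `AU ⊑ B` for some *subgroup `U` with `A ∈ LC(U)`. -/
def cle (c : CG M) (A B : M) : Prop := ∃ U, LC c U A ∧ c.rel A U B

/-- `A`, `B` are disjoint: there are no `C`, `D` with `CD ⊑ A` and `CD ⊑ B`. -/
def Disj (c : CG M) (A B : M) : Prop := ¬ ∃ C D, c.rel C D A ∧ c.rel C D B

/-- `S(A,B)`: there is a *subgroup `V` with `A ∈ RC(V)`, `B ∈ LC(V)`, `AB ⊑ V`;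
we then write `B = A⋄`. -/
def Srel (c : CG M) (A B : M) : Prop :=
  ∃ V, RC c V A ∧ LC c V B ∧ c.rel A B V

/-- The axioms of a coarse group. -/
structure Axioms (c : CG M) : Prop where
  -- (0a) ⊑ is a partial order on *subgroups in which any two elements have a meet
  sle_refl : ∀ U, IsSub c U → sle c U U
  sle_antisymm : ∀ U V, IsSub c U → IsSub c V → sle c U V → sle c V U → U = V
  sle_trans : ∀ U V W, IsSub c U → IsSub c V → IsSub c W → sle c U V → sle c V W → sle c U W
  meet : ∀ U V, IsSub c U → IsSub c V → ∃ W, IsSub c W ∧ sle c W U ∧ sle c W V ∧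
    ∀ T, IsSub c T → sle c T U → sle c T V → sle c T W
  -- (0b) every element is a left *coset and a right *coset of some *subgroup
  exists_lc : ∀ A, ∃ U, LC c U A
  exists_rc : ∀ A, ∃ U, RC c U A
  -- (0c) ⊑ is a partial order on M extending ⊑ on *subgroups
  cle_refl : ∀ A, cle c A A
  cle_antisymm : ∀ A B, cle c A B → cle c B A → A = B
  cle_trans : ∀ A B C, cle c A B → cle c B C → cle c A C
  cle_ext : ∀ U V, IsSub c U → IsSub c V → (cle c U V ↔ sle c U V)
  -- (1)
  lc_up : ∀ U' U A', IsSub c U' → IsSub c U → sle c U' U → LC c U' A' →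
    ∃ A, LC c U A ∧ cle c A' A
  lc_disj : ∀ U' U A' A, IsSub c U' → IsSub c U → sle c U' U → LC c U' A' → LC c U A →
    cle c A' A ∨ Disj c A' A
  rc_up : ∀ U' U A', IsSub c U' → IsSub c U → sle c U' U → RC c U' A' →
    ∃ A, RC c U A ∧ cle c A' A
  rc_disj : ∀ U' U A' A, IsSub c U' → IsSub c U → sle c U' U → RC c U' A' → RC c U A →
    cle c A' A ∨ Disj c A' A
  -- (2) monotonicity
  mono : ∀ A₀ A₁ B₀ B₁ C, c.rel B₀ B₁ C → cle c A₀ B₀ → cle c A₁ B₁ → c.rel A₀ A₁ C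
  -- (3)
  lc_sub_iff : ∀ U V B, IsSub c U → IsSub c V → LC c V B →
    (sle c U V ↔ ∃ A, LC c U A ∧ cle c A B)
  rc_sub_iff : ∀ U V B, IsSub c U → IsSub c V → RC c V B →
    (sle c U V ↔ ∃ A, RC c U A ∧ cle c A B)
  -- (4) inverses
  srel_existsUnique : ∀ A, ∃! B, Srel c A B
  srel_symm : ∀ A B, Srel c A B → Srel c B A
  srel_orderIso : ∀ A B A' B', Srel c A A' → Srel c B B' → (cle c A B ↔ cle c A' B')
  -- (5) products of compatible *cosets
  prod_exists : ∀ U V W A B, RC c U A → LC c V A → RC c V B → LC c W B →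
    ∃ C, RC c U C ∧ LC c W C ∧ c.rel A B C ∧ ∀ D, c.rel A B D → cle c C D

/-- A full filter on `M`. -/
structure FullFilter (c : CG M) (x : Set M) : Prop where
  up : ∀ A ∈ x, ∀ B, cle c A B → B ∈ x
  directed : ∀ A ∈ x, ∀ B ∈ x, ∃ C ∈ x, cle c C A ∧ cle c C B
  lc_mem : ∀ U, IsSub c U → ∃ A ∈ x, LC c U A
  rc_mem : ∀ U, IsSub c U → ∃ A ∈ x, RC c U A

/-- The product of two filters: `x·y = {C : ∃ A ∈ x, B ∈ y, AB ⊑ C}`. -/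
def fprod (c : CG M) (x y : Set M) : Set M :=
  {C | ∃ A ∈ x, ∃ B ∈ y, c.rel A B C}

/-- The inverse of a filter: `x⁻¹ = {A⋄ : A ∈ x}`. -/
def finv (c : CG M) (x : Set M) : Set M :=
  {B | ∃ A ∈ x, Srel c A B}

/-- The identity filter: generated by the *subgroups. -/
def fone (c : CG M) : Set M := {C | ∃ U, IsSub c U ∧ cle c U C}

/-- The space `F(M)` of full filters on `M`. -/
abbrev FF (c : CG M) : Type := {x : Set M // FullFilter c x}

/-- The topology on `F(M)` generated by the sets `Â = {x : A ∈ x}`. -/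
def ffTop (c : CG M) : TopologicalSpace (FF c) :=
  TopologicalSpace.generateFrom {S | ∃ A : M, S = {x : FF c | A ∈ x.1}}

/-- `Â`, as a collection of subsets of `M`: the full filters containing `A`. -/
def hatS (c : CG M) (A : M) : Set (Set M) := {x | FullFilter c x ∧ A ∈ x}

/-- Associativity of the product of full filters. -/
def FAssoc (c : CG M) : Prop :=
  ∀ x y z : Set M, FullFilter c x → FullFilter c y → FullFilter c z →
    fprod c (fprod c x y) z = fprod c x (fprod c y z)

/-- The negative-expression axiom. -/
structure NegAx (c : CG M) : Prop where
  rel_iff : ∀ A B C, c.rel A B C ↔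
    ¬ ∃ D E F, cle c D A ∧ cle c E B ∧ c.rel D E F ∧ Disj c C F
  le_iff : ∀ A B, cle c A B ↔ ¬ ∃ C, cle c C A ∧ Disj c B C

/-- The action of a filter on a *coset: `x·A = B` iff `SA ⊑ B` for some `S ∈ x`. -/
def act (c : CG M) (x : Set M) (A B : M) : Prop := ∃ S ∈ x, c.rel S A B

/-- `𝒱 ⊆ F(M)` is a subgroup of the filter group `F(M)`. -/
def IsSubgroupFF (c : CG M) (V : Set (FF c)) : Prop :=
  (∀ z : FF c, z.1 = fone c → z ∈ V) ∧
  (∀ u ∈ V, ∀ v ∈ V, ∀ w : FF c, w.1 = fprod c u.1 v.1 → w ∈ V) ∧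
  (∀ u ∈ V, ∀ w : FF c, w.1 = finv c u.1 → w ∈ V)

/-- The union of double cosets `⋃_{i<n} V̂·Â_i`, as a collection of subsets of `M`
(the underlying sets of the full filters belonging to it). -/
def doubleUnion (c : CG M) (V : M) {n : ℕ} (A : Fin n → M) : Set (Set M) :=
  {z | ∃ i : Fin n, ∃ u v : Set M, FullFilter c u ∧ FullFilter c v ∧ V ∈ u ∧ A i ∈ v ∧
    z = fprod c u v}

/-- The coset-recognition axiom. -/
def CosetRec (c : CG M) : Prop :=
  ∀ V, IsSub c V → ∀ n : ℕ, 1 ≤ n → ∀ A : Fin n → M, (∀ i, LC c V (A i)) →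
    (fone c ∈ doubleUnion c V A ∧
     (∀ p ∈ doubleUnion c V A, ∀ q ∈ doubleUnion c V A, fprod c p q ∈ doubleUnion c V A) ∧
     (∀ p ∈ doubleUnion c V A, finv c p ∈ doubleUnion c V A)) →
    ∃ U, IsSub c U ∧ (∀ i, c.rel V (A i) U) ∧
      ∀ z : Set M, FullFilter c z → U ∈ z → z ∈ doubleUnion c V A

/-- Roelcke precompactness of the filter group `F(M)`: every open neighbourhood `𝒰` of the
identity satisfies `F(M) = 𝒰·F·𝒰` for some finite `F`. -/
def RoelckeFF (c : CG M) : Prop :=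
  ∀ U : Set (FF c), @IsOpen (FF c) (ffTop c) U → (∀ z : FF c, z.1 = fone c → z ∈ U) →
    ∃ F : Set (FF c), F.Finite ∧
      ∀ z : FF c, ∃ u ∈ U, ∃ f ∈ F, ∃ v ∈ U, z.1 = fprod c (fprod c u.1 f.1) v.1


/-! ### Auxiliary development -/

section Aux

variable {c : CG M}

theorem lc_unique (ax : Axioms c) {U V A : M} (h1 : LC c U A) (h2 : LC c V A) : U = V :=
  ax.sle_antisymm U V h1.1 h2.1 (h2.2.2 U h1.1 h1.2.1) (h1.2.2 V h2.1 h2.2.1)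

theorem rc_unique (ax : Axioms c) {U V A : M} (h1 : RC c U A) (h2 : RC c V A) : U = V :=
  ax.sle_antisymm U V h1.1 h2.1 (h2.2.2 U h1.1 h1.2.1) (h1.2.2 V h2.1 h2.2.1)

theorem sle_cle (ax : Axioms c) {U V : M} (hU : IsSub c U) (hV : IsSub c V)
    (h : sle c U V) : cle c U V := (ax.cle_ext U V hU hV).mpr h

theorem cle_rel_of_lc (ax : Axioms c) {U A B : M} (hU : LC c U A) (h : cle c A B) :
    c.rel A U B := by
  obtain ⟨U', hU', hr⟩ := h
  rwa [lc_unique ax hU' hU] at hr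

theorem cle_compat (ax : Axioms c) {P X Y : M} (h1 : cle c P X) (h2 : cle c P Y) :
    ¬ Disj c X Y := by
  obtain ⟨U, hU, r1⟩ := h1
  exact fun hd => hd ⟨P, U, r1, cle_rel_of_lc ax hU h2⟩

theorem lc_down (ax : Axioms c) {T V A : M} (hT : IsSub c T) (hV : LC c V A)
    (h : sle c T V) : ∃ A', LC c T A' ∧ cle c A' A :=
  (ax.lc_sub_iff T V A hT hV.1 hV).mp h

theorem rc_down (ax : Axioms c) {T V A : M} (hT : IsSub c T) (hV : RC c V A)
    (h : sle c T V) : ∃ A', RC c T A' ∧ cle c A' A :=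
  (ax.rc_sub_iff T V A hT hV.1 hV).mp h

theorem compat_prod (ax : Axioms c) (X Y : M) :
    ∃ X' Y' C₀, cle c X' X ∧ cle c Y' Y ∧ c.rel X' Y' C₀ ∧
      ∀ D, c.rel X' Y' D → cle c C₀ D := by
  obtain ⟨V₁, hV₁⟩ := ax.exists_lc X
  obtain ⟨U₂, hU₂⟩ := ax.exists_rc Y
  obtain ⟨T, hT, hTV₁, hTU₂, -⟩ := ax.meet V₁ U₂ hV₁.1 hU₂.1
  obtain ⟨X', hX', hX'X⟩ := lc_down ax hT hV₁ hTV₁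
  obtain ⟨Y', hY', hY'Y⟩ := rc_down ax hT hU₂ hTU₂
  obtain ⟨S₁, hS₁⟩ := ax.exists_rc X'
  obtain ⟨S₂, hS₂⟩ := ax.exists_lc Y'
  obtain ⟨C₀, -, -, hr, hl⟩ := ax.prod_exists S₁ T S₂ X' Y' hS₁ hX' hY' hS₂
  exact ⟨X', Y', C₀, hX'X, hY'Y, hr, hl⟩

/-- upward closure of `rel` in the third argument -/
theorem rel_up (ax : Axioms c) (nax : NegAx c) {A B C C' : M} (h : c.rel A B C)
    (hCC' : cle c C C') : c.rel A B C' := by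
  rw [nax.rel_iff]
  rintro ⟨D, E, F, hDA, hEB, hDEF, hdisj⟩
  obtain ⟨D', E', P, hD', hE', hrP, hl⟩ := compat_prod ax D E
  have hPF : cle c P F := hl F (ax.mono D' E' D E F hDEF hD' hE')
  have hPC : cle c P C := hl C (ax.mono D' E' A B C h
    (ax.cle_trans _ _ _ hD' hDA) (ax.cle_trans _ _ _ hE' hEB))
  exact cle_compat ax (ax.cle_trans _ _ _ hPC hCC') hPF hdisj

theorem cle_of_rc_rel (ax : Axioms c) (nax : NegAx c) {S B C : M} (hS : RC c S B)
    (h : c.rel S B C) : cle c B C := by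
  rw [nax.le_iff]
  rintro ⟨Q, hQB, hdisj⟩
  obtain ⟨S', hS'⟩ := ax.exists_rc Q
  have hsle : sle c S' S := (ax.rc_sub_iff S' S B hS'.1 hS.1 hS).mpr ⟨Q, hS', hQB⟩
  have h1 : c.rel S Q C := ax.mono S Q S B C h (ax.cle_refl S) hQB
  have h2 : c.rel S' Q C := ax.mono S' Q S Q C h1 (sle_cle ax hS'.1 hS.1 hsle) (ax.cle_refl Q)
  exact hdisj ⟨S', Q, h2, hS'.2.1⟩

/-- every *subgroup is its own left and right *coset -/
theorem sub_lc_rc_self (ax : Axioms c) {V : M} (hV : IsSub c V) : LC c V V ∧ RC c V V := by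
  obtain ⟨W, hW⟩ := ax.exists_lc V
  have hVW : sle c V W := hW.2.2 V hV hV
  obtain ⟨A, hA, hAV⟩ := lc_down ax hV hW hVW
  obtain ⟨B, hB, -⟩ := ax.srel_existsUnique A
  obtain ⟨T, hTA, hTB, hrAB⟩ := hB
  obtain ⟨T', hT'B, hT'A, hrBA⟩ := ax.srel_symm A B ⟨T, hTA, hTB, hrAB⟩
  have hT'V : T' = V := lc_unique ax hT'A hA
  subst hT'V
  obtain ⟨C₀, hC₀rc, hC₀lc, hrC₀, hleast⟩ := ax.prod_exists T' T T' B A hT'B hTB hTA hA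
  have hC₀V : cle c C₀ T' := hleast T' hrBA
  have hsub : IsSub c C₀ := ax.mono C₀ C₀ T' C₀ C₀ hC₀rc.2.1 hC₀V (ax.cle_refl C₀)
  have hEq : C₀ = T' := ax.sle_antisymm C₀ T' hsub hV
    ((ax.cle_ext C₀ T' hsub hV).mp hC₀V) hC₀rc.2.1
  exact ⟨hEq ▸ hC₀lc, hEq ▸ hC₀rc⟩

/-- the `⋄` map -/
noncomputable def dia (ax : Axioms c) (A : M) : M := (ax.srel_existsUnique A).choose

theorem srel_dia (ax : Axioms c) (A : M) : Srel c A (dia ax A) :=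
  (ax.srel_existsUnique A).choose_spec.1

theorem dia_eq (ax : Axioms c) {A B : M} (h : Srel c A B) : dia ax A = B :=
  ((ax.srel_existsUnique A).choose_spec.2 B h).symm

theorem srel_rc_lc (ax : Axioms c) {A B T : M} (h : Srel c A B) (hT : RC c T A) :
    LC c T B ∧ c.rel A B T := by
  obtain ⟨T₀, h1, h2, h3⟩ := h
  have hE : T₀ = T := rc_unique ax h1 hT
  subst hE; exact ⟨h2, h3⟩

theorem srel_lc_rc (ax : Axioms c) {A B T : M} (h : Srel c A B) (hT : LC c T A) :
    RC c T B ∧ c.rel B A T := by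
  obtain ⟨T₀, h1, h2, h3⟩ := ax.srel_symm A B h
  have hE : T₀ = T := lc_unique ax h2 hT
  subst hE; exact ⟨h1, h3⟩

theorem srel_sub (ax : Axioms c) {V : M} (hV : IsSub c V) : Srel c V V :=
  ⟨V, (sub_lc_rc_self ax hV).2, (sub_lc_rc_self ax hV).1, hV⟩

/-! ### Full filters -/

theorem fone_full (ax : Axioms c) : FullFilter c (fone c) := by
  refine ⟨?_, ?_, ?_, ?_⟩
  · rintro A ⟨U, hU, hUA⟩ B hAB
    exact ⟨U, hU, ax.cle_trans U A B hUA hAB⟩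
  · rintro A ⟨U, hU, hUA⟩ B ⟨U', hU', hU'B⟩
    obtain ⟨W, hW, h1, h2, -⟩ := ax.meet U U' hU hU'
    exact ⟨W, ⟨W, hW, ax.cle_refl W⟩,
      ax.cle_trans _ _ _ (sle_cle ax hW hU h1) hUA,
      ax.cle_trans _ _ _ (sle_cle ax hW hU' h2) hU'B⟩
  · exact fun U hU => ⟨U, ⟨U, hU, ax.cle_refl U⟩, (sub_lc_rc_self ax hU).1⟩
  · exact fun U hU => ⟨U, ⟨U, hU, ax.cle_refl U⟩, (sub_lc_rc_self ax hU).2⟩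

theorem mem_refine_lc (ax : Axioms c) {x : Set M} (hx : FullFilter c x) {A : M}
    (hA : A ∈ x) {T : M} (hT : IsSub c T) :
    ∃ A' ∈ x, cle c A' A ∧ ∃ S, LC c S A' ∧ sle c S T := by
  obtain ⟨B₀, hB₀x, hB₀⟩ := hx.lc_mem T hT
  obtain ⟨C, hCx, hCA, hCB₀⟩ := hx.directed A hA B₀ hB₀x
  obtain ⟨S, hS⟩ := ax.exists_lc C
  exact ⟨C, hCx, hCA, S, hS, (ax.lc_sub_iff S T B₀ hS.1 hT hB₀).mpr ⟨C, hS, hCB₀⟩⟩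

theorem mem_refine_rc (ax : Axioms c) {x : Set M} (hx : FullFilter c x) {A : M}
    (hA : A ∈ x) {T : M} (hT : IsSub c T) :
    ∃ A' ∈ x, cle c A' A ∧ ∃ S, RC c S A' ∧ sle c S T := by
  obtain ⟨B₀, hB₀x, hB₀⟩ := hx.rc_mem T hT
  obtain ⟨C, hCx, hCA, hCB₀⟩ := hx.directed A hA B₀ hB₀x
  obtain ⟨S, hS⟩ := ax.exists_rc C
  exact ⟨C, hCx, hCA, S, hS, (ax.rc_sub_iff S T B₀ hS.1 hT hB₀).mpr ⟨C, hS, hCB₀⟩⟩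

theorem mem_coherent_rc (ax : Axioms c) {x : Set M} (hx : FullFilter c x) {Bs B' S' R : M}
    (h1 : Bs ∈ x) (h2 : B' ∈ x) (hS' : RC c S' Bs) (hR : RC c R B')
    (hsle : sle c S' R) : cle c Bs B' := by
  rcases ax.rc_disj S' R Bs B' hS'.1 hR.1 hsle hS' hR with h | h
  · exact h
  · obtain ⟨C, _, hC1, hC2⟩ := hx.directed _ h1 _ h2
    exact (cle_compat ax hC1 hC2 h).elim

theorem fprod_full (ax : Axioms c) (nax : NegAx c) {x y : Set M} (hx : FullFilter c x)
    (hy : FullFilter c y) : FullFilter c (fprod c x y) := by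
  refine ⟨?_, ?_, ?_, ?_⟩
  · rintro C ⟨A, hA, B, hB, hr⟩ C' hCC'
    exact ⟨A, hA, B, hB, rel_up ax nax hr hCC'⟩
  · rintro C ⟨A₀, hA₀, B₀, hB₀, hr₀⟩ C' ⟨A₁, hA₁, B₁, hB₁, hr₁⟩
    obtain ⟨A', hA'x, hA'0, hA'1⟩ := hx.directed A₀ hA₀ A₁ hA₁
    obtain ⟨B', hB'y, hB'0, hB'1⟩ := hy.directed B₀ hB₀ B₁ hB₁
    obtain ⟨R, hR⟩ := ax.exists_rc B'
    obtain ⟨At, hAtx, hAtA', S', hS', hsle⟩ := mem_refine_lc ax hx hA'x hR.1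
    obtain ⟨Bs, hBsy, hBs⟩ := hy.rc_mem S' hS'.1
    have hBsB' : cle c Bs B' := mem_coherent_rc ax hy hBsy hB'y hBs hR hsle
    obtain ⟨S₁, hS₁⟩ := ax.exists_rc At
    obtain ⟨W₁, hW₁⟩ := ax.exists_lc Bs
    obtain ⟨C'', _, _, hc3, hleast⟩ := ax.prod_exists S₁ S' W₁ At Bs hS₁ hS' hBs hW₁
    have hcleAt0 : cle c At A₀ := ax.cle_trans _ _ _ hAtA' hA'0
    have hcleAt1 : cle c At A₁ := ax.cle_trans _ _ _ hAtA' hA'1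
    have hcleBs0 : cle c Bs B₀ := ax.cle_trans _ _ _ hBsB' hB'0
    have hcleBs1 : cle c Bs B₁ := ax.cle_trans _ _ _ hBsB' hB'1
    exact ⟨C'', ⟨At, hAtx, Bs, hBsy, hc3⟩,
      hleast C (ax.mono At Bs A₀ B₀ C hr₀ hcleAt0 hcleBs0),
      hleast C' (ax.mono At Bs A₁ B₁ C' hr₁ hcleAt1 hcleBs1)⟩
  · intro T hT
    obtain ⟨Bt, hBty, hBt⟩ := hy.lc_mem T hT
    obtain ⟨R, hR⟩ := ax.exists_rc Bt
    obtain ⟨At, hAtx, hAt⟩ := hx.lc_mem R hR.1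
    obtain ⟨S₁, hS₁⟩ := ax.exists_rc At
    obtain ⟨C, _, hClc, hCr, -⟩ := ax.prod_exists S₁ R T At Bt hS₁ hAt hR hBt
    exact ⟨C, ⟨At, hAtx, Bt, hBty, hCr⟩, hClc⟩
  · intro T hT
    obtain ⟨At, hAtx, hAt⟩ := hx.rc_mem T hT
    obtain ⟨S, hS⟩ := ax.exists_lc At
    obtain ⟨Bt, hBty, hBt⟩ := hy.rc_mem S hS.1
    obtain ⟨W, hW⟩ := ax.exists_lc Bt
    obtain ⟨C, hCrc, _, hCr, -⟩ := ax.prod_exists T S W At Bt hAt hS hBt hW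
    exact ⟨C, ⟨At, hAtx, Bt, hBty, hCr⟩, hCrc⟩

theorem mem_finv (ax : Axioms c) {x : Set M} {A : M} (hA : A ∈ x) :
    dia ax A ∈ finv c x := ⟨A, hA, srel_dia ax A⟩

theorem finv_full (ax : Axioms c) {x : Set M} (hx : FullFilter c x) :
    FullFilter c (finv c x) := by
  refine ⟨?_, ?_, ?_, ?_⟩
  · rintro B₁ ⟨A, hA, hS⟩ B₂ h12
    have hS2 := srel_dia ax B₂
    have hS2' := ax.srel_symm _ _ hS2
    have h := (ax.srel_orderIso A (dia ax B₂) B₁ B₂ hS hS2').mpr h12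
    exact ⟨dia ax B₂, hx.up A hA _ h, hS2'⟩
  · rintro B₁ ⟨A₁, hA₁, hS₁⟩ B₂ ⟨A₂, hA₂, hS₂⟩
    obtain ⟨D, hD, h1, h2⟩ := hx.directed A₁ hA₁ A₂ hA₂
    exact ⟨dia ax D, mem_finv ax hD,
      (ax.srel_orderIso D A₁ (dia ax D) B₁ (srel_dia ax D) hS₁).mp h1,
      (ax.srel_orderIso D A₂ (dia ax D) B₂ (srel_dia ax D) hS₂).mp h2⟩
  · intro T hT
    obtain ⟨A, hA, hRA⟩ := hx.rc_mem T hT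
    exact ⟨dia ax A, mem_finv ax hA, (srel_rc_lc ax (srel_dia ax A) hRA).1⟩
  · intro T hT
    obtain ⟨A, hA, hLA⟩ := hx.lc_mem T hT
    exact ⟨dia ax A, mem_finv ax hA, (srel_lc_rc ax (srel_dia ax A) hLA).1⟩

/-! ### Group laws -/

theorem fprod_fone (ax : Axioms c) {z : Set M} (hz : FullFilter c z) :
    fprod c z (fone c) = z := by
  ext C; constructor
  · rintro ⟨B, hB, A, ⟨T, hT, hTA⟩, hr⟩
    have h1 : c.rel B T C := ax.mono B T B A C hr (ax.cle_refl B) hTA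
    obtain ⟨B', hB'z, hB'B, S, hS, hsle⟩ := mem_refine_lc ax hz hB hT
    have h2 : c.rel B' S C := ax.mono B' S B T C h1 hB'B (sle_cle ax hS.1 hT hsle)
    exact hz.up B' hB'z C ⟨S, hS, h2⟩
  · intro hC
    obtain ⟨V, hV⟩ := ax.exists_lc C
    exact ⟨C, hC, V, ⟨V, hV.1, ax.cle_refl V⟩, hV.2.1⟩

theorem fone_fprod (ax : Axioms c) (nax : NegAx c) {z : Set M} (hz : FullFilter c z) :
    fprod c (fone c) z = z := by
  ext C; constructor
  · rintro ⟨A, ⟨T, hT, hTA⟩, B, hB, hr⟩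
    have h1 : c.rel T B C := ax.mono T B A B C hr hTA (ax.cle_refl B)
    obtain ⟨B', hB'z, hB'B, S, hS, hsle⟩ := mem_refine_rc ax hz hB hT
    have h2 : c.rel S B' C := ax.mono S B' T B C h1 (sle_cle ax hS.1 hT hsle) hB'B
    exact hz.up B' hB'z C (cle_of_rc_rel ax nax hS h2)
  · intro hC
    obtain ⟨V, hV⟩ := ax.exists_rc C
    exact ⟨V, ⟨V, hV.1, ax.cle_refl V⟩, C, hC, hV.2.1⟩

theorem fprod_finv (ax : Axioms c) (nax : NegAx c) {x : Set M} (hx : FullFilter c x) :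
    fprod c x (finv c x) = fone c := by
  ext C; constructor
  · rintro ⟨A, hA, B', ⟨B, hB, hSB⟩, hr⟩
    obtain ⟨D, hD, hDA, hDB⟩ := hx.directed A hA B hB
    have hSD := srel_dia ax D
    have h1 : cle c (dia ax D) B' := (ax.srel_orderIso D B (dia ax D) B' hSD hSB).mp hDB
    have h2 : c.rel D (dia ax D) C := ax.mono D (dia ax D) A B' C hr hDA h1
    obtain ⟨S, hS⟩ := ax.exists_rc D
    obtain ⟨V, hV⟩ := ax.exists_lc D
    have hld := srel_rc_lc ax hSD hS
    have hrd := srel_lc_rc ax hSD hV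
    obtain ⟨C₀, hC₀rc, _, _, hleast⟩ := ax.prod_exists S V S D (dia ax D) hS hV hrd.1 hld.1
    have hC₀C : cle c C₀ C := hleast C h2
    have hC₀S : cle c C₀ S := hleast S hld.2
    have hsub : IsSub c C₀ := ax.mono C₀ C₀ S C₀ C₀ hC₀rc.2.1 hC₀S (ax.cle_refl C₀)
    exact ⟨C₀, hsub, hC₀C⟩
  · rintro ⟨T, hT, hTC⟩
    obtain ⟨D, hD, hRD⟩ := hx.rc_mem T hT
    have h := (srel_rc_lc ax (srel_dia ax D) hRD).2
    exact ⟨D, hD, dia ax D, mem_finv ax hD, rel_up ax nax h hTC⟩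

theorem finv_fprod (ax : Axioms c) (nax : NegAx c) {x : Set M} (hx : FullFilter c x) :
    fprod c (finv c x) x = fone c := by
  ext C; constructor
  · rintro ⟨B', ⟨B, hB, hSB⟩, A, hA, hr⟩
    obtain ⟨D, hD, hDA, hDB⟩ := hx.directed A hA B hB
    have hSD := srel_dia ax D
    have h1 : cle c (dia ax D) B' := (ax.srel_orderIso D B (dia ax D) B' hSD hSB).mp hDB
    have h2 : c.rel (dia ax D) D C := ax.mono (dia ax D) D B' A C hr h1 hDA
    obtain ⟨S, hS⟩ := ax.exists_rc D
    obtain ⟨V, hV⟩ := ax.exists_lc D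
    have hld := srel_rc_lc ax hSD hS
    have hrd := srel_lc_rc ax hSD hV
    obtain ⟨C₀, hC₀rc, _, _, hleast⟩ := ax.prod_exists V S V (dia ax D) D hrd.1 hld.1 hS hV
    have hC₀C : cle c C₀ C := hleast C h2
    have hC₀V : cle c C₀ V := hleast V hrd.2
    have hsub : IsSub c C₀ := ax.mono C₀ C₀ V C₀ C₀ hC₀rc.2.1 hC₀V (ax.cle_refl C₀)
    exact ⟨C₀, hsub, hC₀C⟩
  · rintro ⟨T, hT, hTC⟩
    obtain ⟨D, hD, hLD⟩ := hx.lc_mem T hT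
    have h := (srel_lc_rc ax (srel_dia ax D) hLD).2
    exact ⟨dia ax D, mem_finv ax hD, D, hD, rel_up ax nax h hTC⟩

theorem finv_finv (ax : Axioms c) (z : Set M) : finv c (finv c z) = z := by
  ext C; constructor
  · rintro ⟨A', ⟨A, hA, h1⟩, h2⟩
    have h3 := ax.srel_symm _ _ h1
    have : C = A := (dia_eq ax h2).symm.trans (dia_eq ax h3)
    exact this ▸ hA
  · intro hC
    exact ⟨dia ax C, ⟨C, hC, srel_dia ax C⟩, ax.srel_symm _ _ (srel_dia ax C)⟩

theorem left_cancel (ax : Axioms c) (nax : NegAx c) (hassoc : FAssoc c) {x u w : Set M}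
    (hx : FullFilter c x) (hu : FullFilter c u) (hw : FullFilter c w)
    (h : fprod c x u = fprod c x w) : u = w := by
  have hfx := finv_full ax hx
  calc u = fprod c (fone c) u := (fone_fprod ax nax hu).symm
    _ = fprod c (fprod c (finv c x) x) u := by rw [finv_fprod ax nax hx]
    _ = fprod c (finv c x) (fprod c x u) := hassoc _ _ _ hfx hx hu
    _ = fprod c (finv c x) (fprod c x w) := by rw [h]
    _ = fprod c (fprod c (finv c x) x) w := (hassoc _ _ _ hfx hx hw).symm
    _ = fprod c (fone c) w := by rw [finv_fprod ax nax hx]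
    _ = w := fone_fprod ax nax hw

theorem right_cancel (ax : Axioms c) (nax : NegAx c) (hassoc : FAssoc c) {x u w : Set M}
    (hx : FullFilter c x) (hu : FullFilter c u) (hw : FullFilter c w)
    (h : fprod c u x = fprod c w x) : u = w := by
  have hfx := finv_full ax hx
  calc u = fprod c u (fone c) := (fprod_fone ax hu).symm
    _ = fprod c u (fprod c x (finv c x)) := by rw [fprod_finv ax nax hx]
    _ = fprod c (fprod c u x) (finv c x) := (hassoc _ _ _ hu hx hfx).symm
    _ = fprod c (fprod c w x) (finv c x) := by rw [h]
    _ = fprod c w (fprod c x (finv c x)) := hassoc _ _ _ hw hx hfx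
    _ = fprod c w (fone c) := by rw [fprod_finv ax nax hx]
    _ = w := fprod_fone ax hw

/-! ### Existence of full filters -/

theorem exists_ff_mem [Countable M] (ax : Axioms c) (A : M) :
    ∃ x, FullFilter c x ∧ A ∈ x := by
  haveI : Nonempty M := ⟨A⟩
  obtain ⟨f, hf⟩ := exists_surjective_nat M
  have refL : ∀ B T : M, ∃ B', cle c B' B ∧
      (IsSub c T → ∃ S, LC c S B' ∧ sle c S T) := by
    intro B T
    by_cases hT : IsSub c T
    · obtain ⟨V, hV⟩ := ax.exists_lc B
      obtain ⟨W, hW, hWT, hWV, -⟩ := ax.meet T V hT hV.1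
      obtain ⟨B', hB', hB'B⟩ := lc_down ax hW hV hWV
      exact ⟨B', hB'B, fun _ => ⟨W, hB', hWT⟩⟩
    · exact ⟨B, ax.cle_refl B, fun h => absurd h hT⟩
  have refR : ∀ B T : M, ∃ B', cle c B' B ∧
      (IsSub c T → ∃ S, RC c S B' ∧ sle c S T) := by
    intro B T
    by_cases hT : IsSub c T
    · obtain ⟨V, hV⟩ := ax.exists_rc B
      obtain ⟨W, hW, hWT, hWV, -⟩ := ax.meet T V hT hV.1
      obtain ⟨B', hB', hB'B⟩ := rc_down ax hW hV hWV
      exact ⟨B', hB'B, fun _ => ⟨W, hB', hWT⟩⟩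
    · exact ⟨B, ax.cle_refl B, fun h => absurd h hT⟩
  choose FL hFL1 hFL2 using refL
  choose FR hFR1 hFR2 using refR
  let step : ℕ → M → M := fun k Bk =>
    if k % 2 = 0 then FL Bk (f (k / 2)) else FR Bk (f (k / 2))
  let g : ℕ → M := fun n => Nat.rec A step n
  have hgs : ∀ k, g (k + 1) = step k (g k) := fun k => rfl
  have hchain : ∀ k, cle c (g (k + 1)) (g k) := by
    intro k
    rw [hgs]
    show cle c (if k % 2 = 0 then FL (g k) (f (k / 2)) else FR (g k) (f (k / 2))) (g k)
    split
    · exact hFL1 _ _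
    · exact hFR1 _ _
  have hmono : ∀ m n, m ≤ n → cle c (g n) (g m) := by
    intro m n h
    induction h with
    | refl => exact ax.cle_refl _
    | step _ ih => exact ax.cle_trans _ _ _ (hchain _) ih
  refine ⟨{B | ∃ n, cle c (g n) B}, ⟨?_, ?_, ?_, ?_⟩, ⟨0, ax.cle_refl A⟩⟩
  · rintro B ⟨n, hn⟩ B' h
    exact ⟨n, ax.cle_trans _ _ _ hn h⟩
  · rintro B ⟨m, hm⟩ B' ⟨n, hn⟩
    exact ⟨g (max m n), ⟨max m n, ax.cle_refl _⟩,
      ax.cle_trans _ _ _ (hmono m _ (le_max_left m n)) hm,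
      ax.cle_trans _ _ _ (hmono n _ (le_max_right m n)) hn⟩
  · intro T hT
    obtain ⟨n, hn⟩ := hf T
    have hk : (2 * n) % 2 = 0 := by omega
    have hk2 : (2 * n) / 2 = n := by omega
    have hgeq : g (2 * n + 1) = FL (g (2 * n)) T := by
      rw [hgs]
      show (if (2 * n) % 2 = 0 then FL (g (2 * n)) (f ((2 * n) / 2))
        else FR (g (2 * n)) (f ((2 * n) / 2))) = FL (g (2 * n)) T
      rw [if_pos hk, hk2, hn]
    obtain ⟨S, hSlc, hsle⟩ := hFL2 (g (2 * n)) T hT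
    rw [← hgeq] at hSlc
    obtain ⟨B, hB, hgB⟩ := ax.lc_up S T (g (2 * n + 1)) hSlc.1 hT hsle hSlc
    exact ⟨B, ⟨2 * n + 1, hgB⟩, hB⟩
  · intro T hT
    obtain ⟨n, hn⟩ := hf T
    have hk : ¬ (2 * n + 1) % 2 = 0 := by omega
    have hk2 : (2 * n + 1) / 2 = n := by omega
    have hgeq : g (2 * n + 1 + 1) = FR (g (2 * n + 1)) T := by
      rw [hgs]
      show (if (2 * n + 1) % 2 = 0 then FL (g (2 * n + 1)) (f ((2 * n + 1) / 2))
        else FR (g (2 * n + 1)) (f ((2 * n + 1) / 2))) = FR (g (2 * n + 1)) T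
      rw [if_neg hk, hk2, hn]
    obtain ⟨S, hSrc, hsle⟩ := hFR2 (g (2 * n + 1)) T hT
    rw [← hgeq] at hSrc
    obtain ⟨B, hB, hgB⟩ := ax.rc_up S T (g (2 * n + 1 + 1)) hSrc.1 hT hsle hSrc
    exact ⟨B, ⟨2 * n + 1 + 1, hgB⟩, hB⟩

end Aux

/-- `Û` is a subgroup of `F(M)`; `A ∈ LC(U)` iff `Â` is a left coset of `Û`
(similarly on the right); and `(Â)⁻¹ = Â⋄`. -/
theorem stmt7 (c : CG M) [Countable M] (ax : Axioms c) (nax : NegAx c) (hassoc : FAssoc c) :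
    (∀ U, IsSub c U →
      fone c ∈ hatS c U ∧
      (∀ x ∈ hatS c U, ∀ y ∈ hatS c U, fprod c x y ∈ hatS c U) ∧
      (∀ x ∈ hatS c U, finv c x ∈ hatS c U)) ∧
    (∀ U A, IsSub c U →
      ((LC c U A ↔ ∃ x, FullFilter c x ∧
          hatS c A = {z | ∃ u ∈ hatS c U, z = fprod c x u}) ∧
       (RC c U A ↔ ∃ x, FullFilter c x ∧
          hatS c A = {z | ∃ u ∈ hatS c U, z = fprod c u x}))) ∧
    (∀ A B, Srel c A B → {z | ∃ x ∈ hatS c A, z = finv c x} = hatS c B) := by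
  refine ⟨?_, ?_, ?_⟩
  · -- Part 1: Û is a subgroup of F(M)
    intro U hU
    refine ⟨⟨fone_full ax, U, hU, ax.cle_refl U⟩, ?_, ?_⟩
    · rintro x ⟨hxf, hUx⟩ y ⟨hyf, hUy⟩
      exact ⟨fprod_full ax nax hxf hyf, U, hUx, U, hUy, hU⟩
    · rintro x ⟨hxf, hUx⟩
      exact ⟨finv_full ax hxf, U, hUx, srel_sub ax hU⟩
  · -- Part 2: cosets
    intro U A hU
    constructor
    · -- LC case
      constructor
      · -- forward
        intro hLC
        obtain ⟨x, hx, hAx⟩ := exists_ff_mem ax A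
        refine ⟨x, hx, ?_⟩
        have hfx := finv_full ax hx
        ext z
        constructor
        · rintro ⟨hzf, hAz⟩
          refine ⟨fprod c (finv c x) z, ⟨fprod_full ax nax hfx hzf,
            dia ax A, mem_finv ax hAx, A, hAz, (srel_lc_rc ax (srel_dia ax A) hLC).2⟩, ?_⟩
          calc z = fprod c (fone c) z := (fone_fprod ax nax hzf).symm
            _ = fprod c (fprod c x (finv c x)) z := by rw [fprod_finv ax nax hx]
            _ = fprod c x (fprod c (finv c x) z) := hassoc _ _ _ hx hfx hzf
        · rintro ⟨u, ⟨huf, hUu⟩, hzeq⟩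
          subst hzeq
          exact ⟨fprod_full ax nax hx huf, A, hAx, U, hUu, hLC.2.1⟩
      · -- backward
        rintro ⟨x, hx, hset⟩
        have hAx : A ∈ x := by
          have h1 : fprod c x (fone c) ∈ hatS c A := by
            rw [hset]
            exact ⟨fone c, ⟨fone_full ax, U, hU, ax.cle_refl U⟩, rfl⟩
          rw [fprod_fone ax hx] at h1
          exact h1.2
        have hrelAUA : c.rel A U A := by
          rw [nax.rel_iff]
          rintro ⟨D, E, F, hDA, hEU, hDEF, hdisj⟩
          obtain ⟨z₁, hz₁, hDz₁⟩ := exists_ff_mem ax D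
          have hAz₁ : A ∈ z₁ := hz₁.up D hDz₁ A hDA
          obtain ⟨w, hw, hEw⟩ := exists_ff_mem ax E
          have hUw : U ∈ w := hw.up E hEw U hEU
          have hz₁mem : z₁ ∈ hatS c A := ⟨hz₁, hAz₁⟩
          rw [hset] at hz₁mem
          obtain ⟨u₁, ⟨hu₁f, hUu₁⟩, hz₁eq⟩ := hz₁mem
          have hu₂f : FullFilter c (fprod c u₁ w) := fprod_full ax nax hu₁f hw
          have hz₂mem : fprod c z₁ w ∈ hatS c A := by
            rw [hset]
            refine ⟨fprod c u₁ w, ⟨hu₂f, U, hUu₁, U, hUw, hU⟩, ?_⟩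
            rw [hz₁eq, hassoc x u₁ w hx hu₁f hw]
          obtain ⟨hz₂f, hAz₂⟩ := hz₂mem
          have hFz₂ : F ∈ fprod c z₁ w := ⟨D, hDz₁, E, hEw, hDEF⟩
          obtain ⟨P, -, hPA, hPF⟩ := hz₂f.directed A hAz₂ F hFz₂
          exact cle_compat ax hPA hPF hdisj
        obtain ⟨V, hV⟩ := ax.exists_lc A
        have hUV : sle c U V := hV.2.2 U hU hrelAUA
        have key : ∀ w, FullFilter c w → V ∈ w → U ∈ w := by
          intro w hw hVw
          have h1 : fprod c x w ∈ hatS c A :=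
            ⟨fprod_full ax nax hx hw, A, hAx, V, hVw, hV.2.1⟩
          rw [hset] at h1
          obtain ⟨u, ⟨huf, hUu⟩, heq⟩ := h1
          have : u = w := left_cancel ax nax hassoc hx huf hw heq.symm
          rw [← this]
          exact hUu
        have hVU : cle c V U := by
          rw [nax.le_iff]
          rintro ⟨Q, hQV, hdisj⟩
          obtain ⟨w, hw, hQw⟩ := exists_ff_mem ax Q
          have hVw : V ∈ w := hw.up Q hQw V hQV
          obtain ⟨P, -, hPU, hPQ⟩ := hw.directed U (key w hw hVw) Q hQw
          exact cle_compat ax hPU hPQ hdisj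
        have hEq : U = V := ax.sle_antisymm U V hU hV.1 hUV
          ((ax.cle_ext V U hV.1 hU).mp hVU)
        rw [hEq]
        exact hV
    · -- RC case
      constructor
      · intro hRC
        obtain ⟨x, hx, hAx⟩ := exists_ff_mem ax A
        refine ⟨x, hx, ?_⟩
        have hfx := finv_full ax hx
        ext z
        constructor
        · rintro ⟨hzf, hAz⟩
          refine ⟨fprod c z (finv c x), ⟨fprod_full ax nax hzf hfx,
            A, hAz, dia ax A, mem_finv ax hAx, (srel_rc_lc ax (srel_dia ax A) hRC).2⟩, ?_⟩
          calc z = fprod c z (fone c) := (fprod_fone ax hzf).symm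
            _ = fprod c z (fprod c (finv c x) x) := by rw [finv_fprod ax nax hx]
            _ = fprod c (fprod c z (finv c x)) x := (hassoc _ _ _ hzf hfx hx).symm
        · rintro ⟨u, ⟨huf, hUu⟩, hzeq⟩
          subst hzeq
          exact ⟨fprod_full ax nax huf hx, U, hUu, A, hAx, hRC.2.1⟩
      · rintro ⟨x, hx, hset⟩
        have hAx : A ∈ x := by
          have h1 : fprod c (fone c) x ∈ hatS c A := by
            rw [hset]
            exact ⟨fone c, ⟨fone_full ax, U, hU, ax.cle_refl U⟩, rfl⟩
          rw [fone_fprod ax nax hx] at h1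
          exact h1.2
        have hrelUAA : c.rel U A A := by
          rw [nax.rel_iff]
          rintro ⟨D, E, F, hDU, hEA, hDEF, hdisj⟩
          obtain ⟨z₁, hz₁, hEz₁⟩ := exists_ff_mem ax E
          have hAz₁ : A ∈ z₁ := hz₁.up E hEz₁ A hEA
          obtain ⟨w, hw, hDw⟩ := exists_ff_mem ax D
          have hUw : U ∈ w := hw.up D hDw U hDU
          have hz₁mem : z₁ ∈ hatS c A := ⟨hz₁, hAz₁⟩
          rw [hset] at hz₁mem
          obtain ⟨u₁, ⟨hu₁f, hUu₁⟩, hz₁eq⟩ := hz₁mem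
          have hu₂f : FullFilter c (fprod c w u₁) := fprod_full ax nax hw hu₁f
          have hz₂mem : fprod c w z₁ ∈ hatS c A := by
            rw [hset]
            refine ⟨fprod c w u₁, ⟨hu₂f, U, hUw, U, hUu₁, hU⟩, ?_⟩
            rw [hz₁eq, ← hassoc w u₁ x hw hu₁f hx]
          obtain ⟨hz₂f, hAz₂⟩ := hz₂mem
          have hFz₂ : F ∈ fprod c w z₁ := ⟨D, hDw, E, hEz₁, hDEF⟩
          obtain ⟨P, -, hPA, hPF⟩ := hz₂f.directed A hAz₂ F hFz₂
          exact cle_compat ax hPA hPF hdisj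
        obtain ⟨V, hV⟩ := ax.exists_rc A
        have hUV : sle c U V := hV.2.2 U hU hrelUAA
        have key : ∀ w, FullFilter c w → V ∈ w → U ∈ w := by
          intro w hw hVw
          have h1 : fprod c w x ∈ hatS c A :=
            ⟨fprod_full ax nax hw hx, V, hVw, A, hAx, hV.2.1⟩
          rw [hset] at h1
          obtain ⟨u, ⟨huf, hUu⟩, heq⟩ := h1
          have : u = w := right_cancel ax nax hassoc hx huf hw heq.symm
          rw [← this]
          exact hUu
        have hVU : cle c V U := by
          rw [nax.le_iff]
          rintro ⟨Q, hQV, hdisj⟩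
          obtain ⟨w, hw, hQw⟩ := exists_ff_mem ax Q
          have hVw : V ∈ w := hw.up Q hQw V hQV
          obtain ⟨P, -, hPU, hPQ⟩ := hw.directed U (key w hw hVw) Q hQw
          exact cle_compat ax hPU hPQ hdisj
        have hEq : U = V := ax.sle_antisymm U V hU hV.1 hUV
          ((ax.cle_ext V U hV.1 hU).mp hVU)
        rw [hEq]
        exact hV
  · -- Part 3: inverses
    intro A B hAB
    ext z
    constructor
    · rintro ⟨x, ⟨hxf, hAx⟩, hz⟩
      subst hz
      exact ⟨finv_full ax hxf, A, hAx, hAB⟩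
    · rintro ⟨hzf, hBz⟩
      exact ⟨finv c z, ⟨finv_full ax hzf, B, hBz, ax.srel_symm A B hAB⟩,
        (finv_finv ax z).symm⟩

end CoarsePaper
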